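/- Consider one inner loop of SARAH (SARAH-IN) with each f_i L-smooth, and suppose the learning rate satisfies η ≤ 2 / ( L ( sqrt(1 + (4m/b)·((n−b)/(n−1))) + 1 ) ). If the output w̃ equals w_t with t chosen uniformly at random from {0,1,...,m}, then E[||∇P(w̃)||²] ≤ (2/(η(m+1)))·[P(w_0) − P(w_*)], where w_* is a global minimizer of P. -/

import Mathlib

open scoped BigOperators

noncomputable section

/-- Vectors in `ℝ^d`. -/
abbrev Vec (d : ℕ) := EuclideanSpace ℝ (Fin d)

/-- The type of mini-batches of size `b` from `{1,…,n}` (modeled as `Fin n`). -/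
def Batch (n b : ℕ) : Type := {s : Finset (Fin n) // s.card = b}

instance (n b : ℕ) : Fintype (Batch n b) :=
  inferInstanceAs (Fintype {s : Finset (Fin n) // s.card = b})

/-- Expectation (uniform average) over a finite sample space. -/
def expec {Ω : Type*} [Fintype Ω] (F : Ω → ℝ) : ℝ :=
  (Fintype.card Ω : ℝ)⁻¹ * ∑ ω, F ω

/-- The SARAH-IN state `(w_t, v_t)` given a starting point `w0`, a learning rate `η`,
a batch size `b` and a sequence of mini-batches `I` (where `I t` is the batch used to
form `v_t`, for `t ≥ 1`). -/
def sarahState {d n : ℕ} (f : Fin n → Vec d → ℝ) (w0 : Vec d) (η : ℝ) (b : ℕ)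
    (I : ℕ → Finset (Fin n)) : ℕ → Vec d × Vec d
  | 0 => (w0, (n : ℝ)⁻¹ • ∑ i, gradient (f i) w0)
  | t + 1 =>
    let p := sarahState f w0 η b I t
    let w' := p.1 - η • p.2
    (w', (b : ℝ)⁻¹ • ∑ i ∈ I (t + 1), (gradient (f i) w' - gradient (f i) p.1) + p.2)

/-- Extend a finite sequence of mini-batches to all of `ℕ` (indices `≥ T` are irrelevant). -/
def pad {n b T : ℕ} (ω : Fin T → Batch n b) : ℕ → Finset (Fin n) :=
  fun t => if h : t < T then (ω ⟨t, h⟩).1 else ∅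

/-!
Along every path, the descent inequality for the `L`-smooth `P` at the step
`w_{t+1} = w_t - η v_t` reads
`η/2 (‖∇P w_t‖² + (1 - Lη) ‖v_t‖² - ‖∇P w_t - v_t‖²) ≤ P w_t - P w_{t+1}`, which telescopes.
The error `∇P w_t - v_t` vanishes at `t = 0`. Resampling only the mini-batch `I_{t+1}`, the new
error is the old one minus the centred mini-batch mean of the increments
`∇f_i w_{t+1} - ∇f_i w_t`, each of norm at most `Lη ‖v_t‖`; sampling `b` of `n` indices without
replacement multiplies their variance by `(n - b) / (b (n - 1))`, so
`E‖∇P w_{t+1} - v_{t+1}‖² ≤ E‖∇P w_t - v_t‖² + L²η² (n - b) / (b (n - 1)) E‖v_t‖²`.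
Summed over `t ≤ m`, the errors cost at most `m L²η² (n - b) / (b (n - 1)) Σ E‖v_t‖²`, and the
step-size condition is exactly what makes this coefficient at most `1 - Lη`.
-/

open Finset
open scoped RealInnerProductSpace

section Smooth

variable {E : Type*} [NormedAddCommGroup E] [InnerProductSpace ℝ E] [CompleteSpace E]

theorem le_add_inner_add_sq_of_lipschitz_gradient {P : E → ℝ} {L : ℝ} (hP : Differentiable ℝ P)
    (hlip : ∀ x y, ‖gradient P x - gradient P y‖ ≤ L * ‖x - y‖) (x y : E) :
    P y ≤ P x + ⟪gradient P x, y - x⟫ + L / 2 * ‖y - x‖ ^ 2 := by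
  set φ : ℝ → ℝ := fun s =>
    P (x + s • (y - x)) - s * ⟪gradient P x, y - x⟫ - L / 2 * s ^ 2 * ‖y - x‖ ^ 2
  set φ' : ℝ → ℝ := fun s =>
    ⟪gradient P (x + s • (y - x)), y - x⟫ - ⟪gradient P x, y - x⟫ - L * s * ‖y - x‖ ^ 2
  have hderiv : ∀ s, HasDerivAt φ (φ' s) s := by
    intro s
    have hline : HasDerivAt (fun s : ℝ => x + s • (y - x)) (y - x) s := by
      simpa using ((hasDerivAt_id s).smul_const (y - x)).const_add x
    have hcomp := ((hP _).hasGradientAt.hasFDerivAt).comp_hasDerivAt s hline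
    have hquad := ((hasDerivAt_pow 2 s).const_mul (L / 2)).mul_const (‖y - x‖ ^ 2)
    have hlin := (hasDerivAt_id s).mul_const ⟪gradient P x, y - x⟫
    refine ((hcomp.sub hlin).sub hquad).congr_deriv ?_
    simp only [φ', InnerProductSpace.toDual_apply_apply]
    ring
  have hφ'_nonpos : ∀ s ∈ interior (Set.Ici (0 : ℝ)), φ' s ≤ 0 := by
    intro s hs
    rw [interior_Ici, Set.mem_Ioi] at hs
    have hcs := real_inner_le_norm (gradient P (x + s • (y - x)) - gradient P x) (y - x)
    have hL := hlip (x + s • (y - x)) x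
    rw [add_sub_cancel_left, norm_smul, Real.norm_of_nonneg hs.le] at hL
    rw [inner_sub_left] at hcs
    nlinarith [norm_nonneg (y - x)]
  have hanti : AntitoneOn φ (Set.Ici 0) :=
    antitoneOn_of_hasDerivWithinAt_nonpos (convex_Ici 0)
      (fun s _ => (hderiv s).continuousAt.continuousWithinAt)
      (fun s _ => (hderiv s).hasDerivWithinAt) hφ'_nonpos
  have h10 : φ 1 ≤ φ 0 := hanti (Set.mem_Ici.2 le_rfl) (Set.mem_Ici.2 zero_le_one) zero_le_one
  simp only [φ, one_smul, add_sub_cancel, zero_smul, add_zero] at h10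
  linarith

theorem apply_sub_smul_le_of_lipschitz_gradient {P : E → ℝ} {L : ℝ} (hP : Differentiable ℝ P)
    (hlip : ∀ x y, ‖gradient P x - gradient P y‖ ≤ L * ‖x - y‖) (η : ℝ) (x v : E) :
    P (x - η • v) ≤ P x - η / 2 * ‖gradient P x‖ ^ 2 - η / 2 * (1 - L * η) * ‖v‖ ^ 2
      + η / 2 * ‖gradient P x - v‖ ^ 2 := by
  have h := le_add_inner_add_sq_of_lipschitz_gradient hP hlip x (x - η • v)
  rw [sub_sub_cancel_left, inner_neg_right, real_inner_smul_right, norm_neg, norm_smul,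
    mul_pow, Real.norm_eq_abs, sq_abs] at h
  linear_combination h - η / 2 * norm_sub_sq_real (gradient P x) v

theorem hasGradientAt_const_mul_sum {ι : Type*} (s : Finset ι) (f : ι → E → ℝ) (c : ℝ) {x : E}
    (hf : ∀ i ∈ s, DifferentiableAt ℝ (f i) x) :
    HasGradientAt (fun w => c * ∑ i ∈ s, f i w) (c • ∑ i ∈ s, gradient (f i) x) x := by
  rw [hasGradientAt_iff_hasFDerivAt, map_smul, map_sum]
  exact (HasFDerivAt.fun_sum fun i hi =>
    hasGradientAt_iff_hasFDerivAt.1 (hf i hi).hasGradientAt).const_mul c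

end Smooth

theorem norm_inv_smul_sum_sub_le {E : Type*} [SeminormedAddCommGroup E] [NormedSpace ℝ E]
    {n : ℕ} (hn : 0 < n) (g h : Fin n → E) {r : ℝ} (hgh : ∀ i, ‖g i - h i‖ ≤ r) :
    ‖(n : ℝ)⁻¹ • ∑ i, g i - (n : ℝ)⁻¹ • ∑ i, h i‖ ≤ r := by
  rw [← smul_sub, ← sum_sub_distrib, norm_smul, norm_inv, Real.norm_natCast,
    inv_mul_le_iff₀ (by positivity)]
  calc ‖∑ i, (g i - h i)‖ ≤ ∑ i, ‖g i - h i‖ := norm_sum_le _ _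
    _ ≤ ∑ _i : Fin n, r := sum_le_sum fun i _ => hgh i
    _ = n * r := by simp

section Expectation

variable {Ω : Type*} [Fintype Ω]

theorem expec_add (F G : Ω → ℝ) : expec (fun ω => F ω + G ω) = expec F + expec G := by
  simp only [expec, sum_add_distrib, mul_add]

theorem expec_sub (F G : Ω → ℝ) : expec (fun ω => F ω - G ω) = expec F - expec G := by
  simp only [expec, sum_sub_distrib, mul_sub]

theorem expec_const_mul (c : ℝ) (F : Ω → ℝ) : expec (fun ω => c * F ω) = c * expec F := by
  simp only [expec, ← mul_sum]
  ring

theorem expec_sum {ι : Type*} (s : Finset ι) (F : ι → Ω → ℝ) :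
    expec (fun ω => ∑ i ∈ s, F i ω) = ∑ i ∈ s, expec (F i) := by
  simp only [expec, mul_sum]
  exact sum_comm

theorem expec_const [Nonempty Ω] (c : ℝ) : expec (fun _ : Ω => c) = c := by
  simp [expec]

theorem expec_mono {F G : Ω → ℝ} (h : ∀ ω, F ω ≤ G ω) : expec F ≤ expec G :=
  mul_le_mul_of_nonneg_left (sum_le_sum fun ω _ => h ω) (by positivity)

theorem expec_nonneg {F : Ω → ℝ} (h : ∀ ω, 0 ≤ F ω) : 0 ≤ expec F :=
  mul_nonneg (by positivity) (sum_nonneg fun ω _ => h ω)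

theorem expec_prod {Ω' : Type*} [Fintype Ω'] (F : Ω × Ω' → ℝ) :
    expec F = expec (fun ω' => expec (fun ω => F (ω, ω'))) := by
  simp only [expec, Fintype.card_prod, Nat.cast_mul, mul_inv, ← mul_sum, Fintype.sum_prod_type]
  rw [sum_comm]
  ring

theorem expec_fin (m : ℕ) (F : ℕ → ℝ) :
    expec (fun t : Fin (m + 1) => F t) = ((m : ℝ) + 1)⁻¹ * ∑ t ∈ range (m + 1), F t := by
  simp [expec, Fin.sum_univ_eq_sum_range F]

/-- Averaging over a fresh copy of one coordinate does not change the expectation, because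
`(ω, s) ↦ (update ω k s, ω k)` is an involution of `(ι → B) × B`. -/
theorem expec_update {ι B : Type*} [Fintype ι] [DecidableEq ι] [Fintype B]
    (k : ι) (F : (ι → B) → ℝ) :
    expec F = expec (fun ω => expec (fun s : B => F (Function.update ω k s))) := by
  rcases isEmpty_or_nonempty B with hB | hB
  · have : IsEmpty (ι → B) := ⟨fun ω => hB.false (ω k)⟩
    simp [expec]
  let e : Equiv.Perm ((ι → B) × B) := Function.Involutive.toPerm
    (fun p => (Function.update p.1 k p.2, p.1 k)) fun p => by simp
  have hsum : ∑ p, F (e p).1 = ∑ p : (ι → B) × B, F p.1 := Equiv.sum_comp e (fun p => F p.1)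
  simp only [expec, ← mul_sum, Fintype.sum_prod_type] at hsum ⊢
  simp only [sum_const, card_univ, nsmul_eq_mul] at hsum
  change ∑ x, ∑ y, F (Function.update x k y) = _ at hsum
  rw [← mul_assoc, hsum, ← mul_sum, ← mul_assoc, mul_assoc _ _ (Fintype.card B : ℝ),
    inv_mul_cancel₀ (by positivity), mul_one]

end Expectation

section Sampling

theorem sum_sum_mem {ι M : Type*} [Fintype ι] [DecidableEq ι] [AddCommMonoid M]
    (A : Finset (Finset ι)) (g : ι → M) :
    ∑ S ∈ A, ∑ i ∈ S, g i = ∑ i, #{S ∈ A | i ∈ S} • g i := by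
  simp_rw [← sum_const, sum_filter]
  rw [sum_comm]
  simp [sum_ite_mem]

theorem sum_sum_mem_sum_mem {ι M : Type*} [Fintype ι] [DecidableEq ι] [AddCommMonoid M]
    (A : Finset (Finset ι)) (h : ι → ι → M) :
    ∑ S ∈ A, ∑ i ∈ S, ∑ j ∈ S, h i j = ∑ i, ∑ j, #{S ∈ A | i ∈ S ∧ j ∈ S} • h i j := by
  calc ∑ S ∈ A, ∑ i ∈ S, ∑ j ∈ S, h i j
      = ∑ S ∈ A, ∑ i, ∑ j, if i ∈ S ∧ j ∈ S then h i j else 0 := by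
        refine sum_congr rfl fun S _ => ?_
        simp only [ite_and, sum_ite_irrel, sum_const_zero]
        simp [sum_ite_mem]
    _ = _ := by
        rw [sum_comm]
        refine sum_congr rfl fun i _ => ?_
        rw [sum_comm]
        simp only [← sum_filter, sum_const]

variable {n b : ℕ}

theorem card_filter_mem_powersetCard_mul (i : Fin n) :
    (#{S ∈ (univ : Finset (Fin n)).powersetCard b | i ∈ S} : ℝ) * n = n.choose b * b := by
  obtain _ | k := b
  · simp
  obtain ⟨n', rfl⟩ : ∃ n', n = n' + 1 := ⟨n - 1, by have := i.pos; omega⟩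
  have h := card_filter_powersetCard_subset {i} univ (k + 1) (subset_univ _) (by simp)
  simp only [singleton_subset_iff, card_singleton, card_univ, Fintype.card_fin,
    Nat.add_sub_cancel] at h
  have hchoose := congrArg (Nat.cast : ℕ → ℝ) (Nat.add_one_mul_choose_eq n' k)
  push_cast at hchoose ⊢
  rw [h]
  linarith

theorem card_filter_mem_mem_powersetCard_mul (i j : Fin n) :
    (#{S ∈ (univ : Finset (Fin n)).powersetCard b | i ∈ S ∧ j ∈ S} : ℝ) * (n * (n - 1))
      = n.choose b * b * (b - 1) + if i = j then (n.choose b * b * (n - b) : ℝ) else 0 := by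
  by_cases hij : i = j
  · subst hij
    simp only [and_self, if_true]
    linear_combination ((n : ℝ) - 1) * card_filter_mem_powersetCard_mul (b := b) i
  rw [if_neg hij, add_zero]
  obtain hb | ⟨k, rfl⟩ : b < 2 ∨ ∃ k, b = k + 2 := by
    rcases Nat.lt_or_ge b 2 with h | h
    · exact .inl h
    · exact .inr ⟨b - 2, by omega⟩
  · have hempty : {S ∈ (univ : Finset (Fin n)).powersetCard b | i ∈ S ∧ j ∈ S} = ∅ := by
      refine filter_false_of_mem fun S hS ⟨hi, hj⟩ => ?_
      have h2 := card_le_card (insert_subset hi (singleton_subset_iff.2 hj))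
      rw [card_pair hij, (mem_powersetCard.1 hS).2] at h2
      omega
    interval_cases b <;> simp [hempty]
  have hn : 2 ≤ n := by simpa [card_pair hij] using card_le_univ {i, j}
  obtain ⟨n', rfl⟩ : ∃ n', n = n' + 2 := ⟨n - 2, by omega⟩
  have h := card_filter_powersetCard_subset {i, j} univ (k + 2) (subset_univ _)
    (by rw [card_pair hij]; omega)
  simp only [insert_subset_iff, singleton_subset_iff, card_pair hij, card_univ,
    Fintype.card_fin, Nat.add_sub_cancel] at h
  have h1 := congrArg (Nat.cast : ℕ → ℝ) (Nat.add_one_mul_choose_eq n' k)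
  have h2 := congrArg (Nat.cast : ℕ → ℝ) (Nat.add_one_mul_choose_eq (n' + 1) (k + 1))
  push_cast at h1 h2 ⊢
  rw [h]
  linear_combination ((n' : ℝ) + 2) * h1 + ((k : ℝ) + 1) * h2

variable {E : Type*} [NormedAddCommGroup E] [InnerProductSpace ℝ E]

theorem sum_powersetCard_norm_sum_sq (y : Fin n → E) (hy : ∑ i, y i = 0) :
    (∑ S ∈ (univ : Finset (Fin n)).powersetCard b, ‖∑ i ∈ S, y i‖ ^ 2) * (n * (n - 1))
      = n.choose b * b * (n - b) * ∑ i, ‖y i‖ ^ 2 := by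
  have hexp : ∀ S : Finset (Fin n), ‖∑ i ∈ S, y i‖ ^ 2 = ∑ i ∈ S, ∑ j ∈ S, ⟪y i, y j⟫ := by
    intro S
    rw [← real_inner_self_eq_norm_sq, sum_inner]
    simp_rw [inner_sum]
  have hcross : ∑ i, ∑ j, ⟪y i, y j⟫ = 0 := by
    simp_rw [← inner_sum, ← sum_inner, hy, inner_zero_left]
  simp_rw [hexp, sum_sum_mem_sum_mem, sum_mul, nsmul_eq_mul, mul_right_comm _ _ ((n : ℝ) * _),
    card_filter_mem_mem_powersetCard_mul, add_mul, sum_add_distrib, ite_mul, zero_mul,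
    sum_ite_eq, mem_univ, if_true, ← mul_sum, hcross, real_inner_self_eq_norm_sq]
  ring

theorem sum_batch {M : Type*} [AddCommMonoid M] (F : Finset (Fin n) → M) :
    ∑ S : Batch n b, F S.1 = ∑ S ∈ (univ : Finset (Fin n)).powersetCard b, F S :=
  (sum_subtype _ (fun _ => mem_powersetCard_univ) F).symm

theorem card_batch : Fintype.card (Batch n b) = n.choose b := by
  rw [Fintype.card_eq_sum_ones, sum_batch (fun _ => 1)]
  simp

theorem batch_nonempty (hbn : b ≤ n) : Nonempty (Batch n b) :=
  Fintype.card_pos_iff.1 (card_batch ▸ Nat.choose_pos hbn)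

theorem minibatch_factor_nonneg (hn : 1 ≤ n) (hbn : b ≤ n) :
    0 ≤ ((n : ℝ) - b) / (b * (n - 1)) := by
  have hbn' : (b : ℝ) ≤ n := by exact_mod_cast hbn
  have hn' : (1 : ℝ) ≤ n := by exact_mod_cast hn
  exact div_nonneg (by linarith) (mul_nonneg (by positivity) (by linarith))

theorem sum_batch_sum_eq_zero (y : Fin n → E) (hy : ∑ i, y i = 0) :
    ∑ S : Batch n b, ∑ i ∈ S.1, y i = 0 := by
  rw [sum_batch (fun S => ∑ i ∈ S, y i), sum_sum_mem]
  rcases Nat.eq_zero_or_pos n with rfl | hn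
  · simp
  have hcount : ∀ i : Fin n, (#{S ∈ (univ : Finset (Fin n)).powersetCard b | i ∈ S} : ℝ)
      = n.choose b * b / n := fun i =>
    eq_div_of_mul_eq (by positivity) (card_filter_mem_powersetCard_mul i)
  simp_rw [← Nat.cast_smul_eq_nsmul ℝ, hcount, ← smul_sum, hy, smul_zero]

theorem expec_norm_inv_smul_sum_sq (hn : 2 ≤ n) (hb : 0 < b) (hbn : b ≤ n) (y : Fin n → E)
    (hy : ∑ i, y i = 0) :
    expec (fun S : Batch n b => ‖(b : ℝ)⁻¹ • ∑ i ∈ S.1, y i‖ ^ 2)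
      = (n - b) / (b * (n - 1)) * ((n : ℝ)⁻¹ * ∑ i, ‖y i‖ ^ 2) := by
  have hvar := sum_powersetCard_norm_sum_sq (b := b) y hy
  have hC : (n.choose b : ℝ) ≠ 0 := by exact_mod_cast (Nat.choose_pos hbn).ne'
  have hn1 : (n : ℝ) - 1 ≠ 0 := by
    have : (2 : ℝ) ≤ n := by exact_mod_cast hn
    linarith
  simp only [expec, card_batch, norm_smul, mul_pow, norm_inv, Real.norm_natCast]
  rw [← mul_sum, sum_batch (fun S => ‖∑ i ∈ S, y i‖ ^ 2)]
  field_simp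
  linear_combination hvar

theorem expec_norm_sub_sq_of_sum_eq_zero {Ω : Type*} [Fintype Ω] [Nonempty Ω] (u : E)
    (D : Ω → E) (hD : ∑ ω, D ω = 0) :
    expec (fun ω => ‖u - D ω‖ ^ 2) = ‖u‖ ^ 2 + expec (fun ω => ‖D ω‖ ^ 2) := by
  have hcross : expec (fun ω => 2 * ⟪u, D ω⟫) = 0 := by
    simp [expec, ← mul_sum, ← inner_sum, hD]
  simp_rw [norm_sub_sq_real, expec_add, expec_sub, expec_const, hcross, sub_zero]

theorem sum_norm_sub_mean_sq_le (g : Fin n → E) :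
    ∑ i, ‖g i - (n : ℝ)⁻¹ • ∑ j, g j‖ ^ 2 ≤ ∑ i, ‖g i‖ ^ 2 := by
  rcases Nat.eq_zero_or_pos n with rfl | hn
  · simp
  set gbar := (n : ℝ)⁻¹ • ∑ j, g j
  have hsum : ∑ j, g j = (n : ℝ) • gbar := by
    rw [smul_inv_smul₀ (by positivity)]
  have hexpand : ∑ i, ‖g i - gbar‖ ^ 2 = ∑ i, ‖g i‖ ^ 2 - n * ‖gbar‖ ^ 2 := by
    simp_rw [norm_sub_sq_real, sum_add_distrib, sum_sub_distrib, ← mul_sum, ← sum_inner, hsum,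
      real_inner_smul_left, real_inner_self_eq_norm_sq, sum_const, card_univ, Fintype.card_fin,
      nsmul_eq_mul]
    ring
  rw [hexpand]
  linarith [sq_nonneg ‖gbar‖, (by positivity : (0 : ℝ) ≤ n * ‖gbar‖ ^ 2)]

theorem expec_norm_sub_minibatch_sq_le (hn : 2 ≤ n) (hb : 0 < b) (hbn : b ≤ n) (u : E)
    (g : Fin n → E) {r : ℝ} (hg : ∀ i, ‖g i‖ ≤ r) :
    expec (fun S : Batch n b => ‖u - ((b : ℝ)⁻¹ • ∑ i ∈ S.1, g i - (n : ℝ)⁻¹ • ∑ i, g i)‖ ^ 2)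
      ≤ ‖u‖ ^ 2 + (n - b) / (b * (n - 1)) * r ^ 2 := by
  have := batch_nonempty hbn
  set y : Fin n → E := fun i => g i - (n : ℝ)⁻¹ • ∑ j, g j
  have hy : ∑ i, y i = 0 := by
    simp only [y, sum_sub_distrib, sum_const, card_univ, Fintype.card_fin,
      ← Nat.cast_smul_eq_nsmul ℝ, smul_inv_smul₀ (by positivity : (n : ℝ) ≠ 0), sub_self]
  have hcenter : ∀ S : Batch n b, (b : ℝ)⁻¹ • ∑ i ∈ S.1, g i - (n : ℝ)⁻¹ • ∑ i, g i
      = (b : ℝ)⁻¹ • ∑ i ∈ S.1, y i := by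
    intro S
    simp only [y, sum_sub_distrib, sum_const, S.2, ← Nat.cast_smul_eq_nsmul ℝ, smul_sub,
      inv_smul_smul₀ (by positivity : (b : ℝ) ≠ 0)]
  have hfactor := minibatch_factor_nonneg (by omega) hbn
  have hD : ∑ S : Batch n b, (b : ℝ)⁻¹ • ∑ i ∈ S.1, y i = 0 := by
    rw [← smul_sum, sum_batch_sum_eq_zero y hy, smul_zero]
  simp_rw [hcenter]
  rw [expec_norm_sub_sq_of_sum_eq_zero u _ hD, expec_norm_inv_smul_sum_sq hn hb hbn y hy]
  have hg2 : ∑ i, ‖g i‖ ^ 2 ≤ n * r ^ 2 := by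
    simpa using sum_le_sum fun i (_ : i ∈ univ) => pow_le_pow_left₀ (norm_nonneg _) (hg i) 2
  have hmean : (n : ℝ)⁻¹ * ∑ i, ‖y i‖ ^ 2 ≤ r ^ 2 := by
    rw [inv_mul_le_iff₀ (by positivity)]
    exact (sum_norm_sub_mean_sq_le g).trans hg2
  gcongr

end Sampling

theorem sum_range_le_mul_sum_of_le_add {A B : ℕ → ℝ} {C : ℝ} {m : ℕ} (hA0 : A 0 = 0)
    (hA : ∀ t < m, A (t + 1) ≤ A t + C * B t) (hB : ∀ t, 0 ≤ B t) (hC : 0 ≤ C) :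
    ∑ t ∈ range (m + 1), A t ≤ C * m * ∑ t ∈ range (m + 1), B t := by
  have hle : ∀ t ≤ m, A t ≤ C * ∑ j ∈ range t, B j := by
    intro t ht
    induction t with
    | zero => simp [hA0]
    | succ t ih =>
      rw [sum_range_succ, mul_add]
      linarith [ih (by omega), hA t (by omega)]
  have hmono : ∀ t ≤ m, ∑ j ∈ range (t + 1), B j ≤ ∑ j ∈ range (m + 1), B j := fun t ht =>
    sum_le_sum_of_subset_of_nonneg (range_subset_range.2 (by omega)) fun j _ _ => hB j
  calc ∑ t ∈ range (m + 1), A t = ∑ t ∈ range m, A (t + 1) := by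
        rw [sum_range_succ', hA0, add_zero]
    _ ≤ ∑ _t ∈ range m, C * ∑ j ∈ range (m + 1), B j := by
        refine sum_le_sum fun t ht => (hle (t + 1) (by simp at ht; omega)).trans ?_
        exact mul_le_mul_of_nonneg_left (hmono t (by simp at ht; omega)) hC
    _ = C * m * ∑ t ∈ range (m + 1), B t := by
        rw [sum_const, card_range, nsmul_eq_mul]
        ring

/-- `2 / (√(1 + K) + 1)` is the positive root of `K x² / 4 + x = 1`. -/
theorem mul_sq_add_le_one_of_le_two_div {K x : ℝ} (hK : 0 ≤ K) (hx : 0 ≤ x)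
    (hxK : x ≤ 2 / (√(1 + K) + 1)) : K / 4 * x ^ 2 + x ≤ 1 := by
  have hR : 1 ≤ √(1 + K) := Real.one_le_sqrt.2 (by linarith)
  have hRsq : √(1 + K) ^ 2 = 1 + K := Real.sq_sqrt (by linarith)
  rw [le_div_iff₀ (by linarith)] at hxK
  have hxR : x * √(1 + K) ≤ 2 - x := by linarith
  have hsq : (x * √(1 + K)) ^ 2 ≤ (2 - x) ^ 2 := pow_le_pow_left₀ (by positivity) hxR 2
  nlinarith

theorem sum_range_le_of_descent_of_le_add {G A B : ℕ → ℝ} {c C D : ℝ} {m : ℕ}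
    (hdescent : ∑ t ∈ range (m + 1), (G t + c * B t - A t) ≤ D) (hA0 : A 0 = 0)
    (hA : ∀ t < m, A (t + 1) ≤ A t + C * B t) (hB : ∀ t, 0 ≤ B t) (hC : 0 ≤ C)
    (hCm : C * m ≤ c) :
    ∑ t ∈ range (m + 1), G t ≤ D := by
  have hsumA := sum_range_le_mul_sum_of_le_add hA0 hA hB hC
  have hsumB : 0 ≤ ∑ t ∈ range (m + 1), B t := sum_nonneg fun t _ => hB t
  rw [sum_sub_distrib, sum_add_distrib, ← mul_sum] at hdescent
  nlinarith

theorem sarah_step_size_le {n b m : ℕ} {L η : ℝ} (hn : 2 ≤ n) (hbn : b ≤ n) (hL : 0 < L)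
    (hη : 0 < η) (hη2 : η ≤ 2 / (L * (√(1 + 4 * m / b * ((n - b) / (n - 1))) + 1))) :
    L ^ 2 * η ^ 2 * ((n - b) / (b * (n - 1))) * m ≤ 1 - L * η := by
  have hbn' : (b : ℝ) ≤ n := by exact_mod_cast hbn
  have hn' : (2 : ℝ) ≤ n := by exact_mod_cast hn
  set K : ℝ := 4 * m / b * ((n - b) / (n - 1))
  have hK : 0 ≤ K := mul_nonneg (by positivity) (div_nonneg (by linarith) (by linarith))
  have hLη : L * η ≤ 2 / (√(1 + K) + 1) := by
    rw [le_div_iff₀ (by positivity)] at hη2 ⊢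
    linarith
  have hCK : L ^ 2 * η ^ 2 * ((n - b) / (b * (n - 1))) * m = K / 4 * (L * η) ^ 2 := by
    simp only [K]
    field_simp
  linarith [mul_sq_add_le_one_of_le_two_div hK (by positivity) hLη]

section Sarah

variable {d n : ℕ} (f : Fin n → Vec d → ℝ) (η : ℝ) (b : ℕ)

def sarahStep (I : Finset (Fin n)) (p : Vec d × Vec d) : Vec d × Vec d :=
  (p.1 - η • p.2,
    (b : ℝ)⁻¹ • ∑ i ∈ I, (gradient (f i) (p.1 - η • p.2) - gradient (f i) p.1) + p.2)

variable (w0 : Vec d)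

theorem sarahState_succ (I : ℕ → Finset (Fin n)) (t : ℕ) :
    sarahState f w0 η b I (t + 1) = sarahStep f η b (I (t + 1)) (sarahState f w0 η b I t) :=
  rfl

theorem sarahState_congr {I I' : ℕ → Finset (Fin n)} {t : ℕ} (h : ∀ s ≤ t, I s = I' s) :
    sarahState f w0 η b I t = sarahState f w0 η b I' t := by
  induction t with
  | zero => rfl
  | succ t ih =>
    rw [sarahState_succ, sarahState_succ, ih fun s hs => h s (by omega), h (t + 1) le_rfl]

theorem sarahState_pad_update {T t : ℕ} (ω : Fin T → Batch n b) (ht : t + 1 < T)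
    (S : Batch n b) :
    sarahState f w0 η b (pad (Function.update ω ⟨t + 1, ht⟩ S)) (t + 1)
      = sarahStep f η b S.1 (sarahState f w0 η b (pad ω) t) := by
  rw [sarahState_succ]
  congr 1
  · simp [pad, ht]
  · refine sarahState_congr f η b w0 fun s hs => ?_
    have hsT : s < T := by omega
    simp only [pad, hsT, dif_pos]
    rw [Function.update_of_ne (by simp [Fin.ext_iff]; omega)]

variable {P : Vec d → ℝ} {L : ℝ}

theorem expec_sarahStep_error_le (hn : 2 ≤ n) (hb : 0 < b) (hbn : b ≤ n)
    (hsmooth : ∀ i (w w' : Vec d), ‖gradient (f i) w - gradient (f i) w'‖ ≤ L * ‖w - w'‖)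
    (hgrad : ∀ w, gradient P w = (n : ℝ)⁻¹ • ∑ i, gradient (f i) w) (p : Vec d × Vec d) :
    expec (fun S : Batch n b =>
        ‖gradient P (sarahStep f η b S.1 p).1 - (sarahStep f η b S.1 p).2‖ ^ 2)
      ≤ ‖gradient P p.1 - p.2‖ ^ 2 + L ^ 2 * η ^ 2 * ((n - b) / (b * (n - 1))) * ‖p.2‖ ^ 2 := by
  set g : Fin n → Vec d := fun i => gradient (f i) (p.1 - η • p.2) - gradient (f i) p.1
  have herror : ∀ S : Batch n b,
      gradient P (sarahStep f η b S.1 p).1 - (sarahStep f η b S.1 p).2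
        = (gradient P p.1 - p.2) - ((b : ℝ)⁻¹ • ∑ i ∈ S.1, g i - (n : ℝ)⁻¹ • ∑ i, g i) := by
    intro S
    simp only [sarahStep, hgrad, g, sum_sub_distrib, smul_sub]
    abel
  have hg : ∀ i, ‖g i‖ ≤ L * ‖η • p.2‖ := fun i => by
    simpa [g] using hsmooth i (p.1 - η • p.2) p.1
  simp_rw [herror]
  refine (expec_norm_sub_minibatch_sq_le hn hb hbn _ g hg).trans_eq ?_
  rw [norm_smul, Real.norm_eq_abs, mul_pow, mul_pow, sq_abs]
  ring

theorem expec_sarahState_error_succ_le (hn : 2 ≤ n) (hb : 0 < b) (hbn : b ≤ n)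
    (hsmooth : ∀ i (w w' : Vec d), ‖gradient (f i) w - gradient (f i) w'‖ ≤ L * ‖w - w'‖)
    (hgrad : ∀ w, gradient P w = (n : ℝ)⁻¹ • ∑ i, gradient (f i) w) {T t : ℕ} (ht : t + 1 < T) :
    expec (fun ω : Fin T → Batch n b => ‖gradient P (sarahState f w0 η b (pad ω) (t + 1)).1
        - (sarahState f w0 η b (pad ω) (t + 1)).2‖ ^ 2)
      ≤ expec (fun ω : Fin T → Batch n b => ‖gradient P (sarahState f w0 η b (pad ω) t).1
          - (sarahState f w0 η b (pad ω) t).2‖ ^ 2)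
        + L ^ 2 * η ^ 2 * ((n - b) / (b * (n - 1)))
          * expec (fun ω : Fin T → Batch n b => ‖(sarahState f w0 η b (pad ω) t).2‖ ^ 2) := by
  rw [expec_update ⟨t + 1, ht⟩, ← expec_const_mul, ← expec_add]
  simp_rw [sarahState_pad_update f η b w0 _ ht]
  exact expec_mono fun ω => expec_sarahStep_error_le f η b hn hb hbn hsmooth hgrad _

theorem sum_range_sarahState_descent_le (hP : Differentiable ℝ P)
    (hlip : ∀ x y, ‖gradient P x - gradient P y‖ ≤ L * ‖x - y‖) (hη : 0 < η) {wstar : Vec d}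
    (hmin : ∀ w, P wstar ≤ P w) (I : ℕ → Finset (Fin n)) (T : ℕ) :
    ∑ t ∈ range T, (‖gradient P (sarahState f w0 η b I t).1‖ ^ 2
        + (1 - L * η) * ‖(sarahState f w0 η b I t).2‖ ^ 2
        - ‖gradient P (sarahState f w0 η b I t).1 - (sarahState f w0 η b I t).2‖ ^ 2)
      ≤ 2 / η * (P w0 - P wstar) := by
  calc _ ≤ ∑ t ∈ range T, 2 / η * (P (sarahState f w0 η b I t).1
          - P (sarahState f w0 η b I (t + 1)).1) := by
        refine sum_le_sum fun t _ => ?_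
        have hstep : P (sarahState f w0 η b I (t + 1)).1 ≤ _ :=
          apply_sub_smul_le_of_lipschitz_gradient hP hlip η
          (sarahState f w0 η b I t).1 (sarahState f w0 η b I t).2
        rw [div_mul_eq_mul_div, le_div_iff₀ hη]
        linear_combination 2 * hstep
    _ = 2 / η * (P w0 - P (sarahState f w0 η b I T).1) := by
        rw [← mul_sum, sum_range_sub' (fun t => P (sarahState f w0 η b I t).1)]
        rfl
    _ ≤ 2 / η * (P w0 - P wstar) := by
        gcongr
        exact hmin _

theorem sum_expec_sarahState_descent_le [Nonempty (Batch n b)] (hP : Differentiable ℝ P)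
    (hlip : ∀ x y, ‖gradient P x - gradient P y‖ ≤ L * ‖x - y‖) (hη : 0 < η) {wstar : Vec d}
    (hmin : ∀ w, P wstar ≤ P w) (T M : ℕ) :
    ∑ t ∈ range M,
        (expec (fun ω : Fin T → Batch n b => ‖gradient P (sarahState f w0 η b (pad ω) t).1‖ ^ 2)
        + (1 - L * η) * expec (fun ω : Fin T → Batch n b =>
            ‖(sarahState f w0 η b (pad ω) t).2‖ ^ 2)
        - expec (fun ω : Fin T → Batch n b => ‖gradient P (sarahState f w0 η b (pad ω) t).1
            - (sarahState f w0 η b (pad ω) t).2‖ ^ 2))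
      ≤ 2 / η * (P w0 - P wstar) := by
  simp_rw [← expec_const_mul, ← expec_add, ← expec_sub, ← expec_sum]
  exact (expec_mono fun ω => sum_range_sarahState_descent_le f η b w0 hP hlip hη hmin _ M).trans_eq
    (expec_const _)

end Sarah

/-- **Theorem 1 of SARAH (nonconvex).** One inner loop of SARAH with small enough
learning rate and output `w̃ = w_t` for `t` uniform in `{0,…,m}` satisfies
`E‖∇P(w̃)‖² ≤ 2/(η(m+1))·(P(w₀) − P(w⋆))`. -/
theorem sarah_in_convergence
    {d n : ℕ} (hn : 2 ≤ n)
    (f : Fin n → Vec d → ℝ) (L : ℝ) (hL : 0 < L)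
    (hdiff : ∀ i, Differentiable ℝ (f i))
    (hsmooth : ∀ i (w w' : Vec d),
      ‖gradient (f i) w - gradient (f i) w'‖ ≤ L * ‖w - w'‖)
    (P : Vec d → ℝ) (hP : P = fun w => (n : ℝ)⁻¹ * ∑ i, f i w)
    (wstar : Vec d) (hmin : ∀ w, P wstar ≤ P w)
    (w0 : Vec d) (η : ℝ) (hη : 0 < η) (b m : ℕ) (hb : 1 ≤ b) (hbn : b ≤ n)
    (hη2 : η ≤ 2 / (L * (Real.sqrt (1 + 4 * (m : ℝ) / (b : ℝ)
      * (((n : ℝ) - (b : ℝ)) / ((n : ℝ) - 1))) + 1))) :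
    expec (fun p : (Fin (m + 1) → Batch n b) × Fin (m + 1) =>
        ‖gradient P ((sarahState f w0 η b (pad p.1) (p.2 : ℕ)).1)‖ ^ 2)
      ≤ 2 / (η * ((m : ℝ) + 1)) * (P w0 - P wstar) := by
  have := batch_nonempty hbn
  have hgrad : ∀ w, HasGradientAt P ((n : ℝ)⁻¹ • ∑ i, gradient (f i) w) w := fun w =>
    hP ▸ hasGradientAt_const_mul_sum _ f _ fun i _ => (hdiff i).differentiableAt
  have hgradP : ∀ w, gradient P w = (n : ℝ)⁻¹ • ∑ i, gradient (f i) w :=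
    fun w => (hgrad w).gradient
  have hlip : ∀ x y, ‖gradient P x - gradient P y‖ ≤ L * ‖x - y‖ := fun x y => by
    simpa only [hgradP] using norm_inv_smul_sum_sub_le (by omega) _ _ fun i => hsmooth i x y
  have hdiffP : Differentiable ℝ P := fun w => (hgrad w).differentiableAt
  have hfactor := minibatch_factor_nonneg (by omega) hbn
  have hsum := sum_range_le_of_descent_of_le_add
    (sum_expec_sarahState_descent_le f η b w0 hdiffP hlip hη hmin (m + 1) (m + 1))
    (by simp [sarahState, hgradP, expec])
    (fun t ht => expec_sarahState_error_succ_le f η b w0 hn hb hbn hsmooth hgradP (by omega))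
    (fun t => expec_nonneg fun ω => by positivity) (by positivity)
    (sarah_step_size_le hn hbn hL hη hη2)
  rw [expec_prod, expec_fin m fun t => expec fun ω : Fin (m + 1) → Batch n b =>
    ‖gradient P (sarahState f w0 η b (pad ω) t).1‖ ^ 2]
  calc _ ≤ ((m : ℝ) + 1)⁻¹ * (2 / η * (P w0 - P wstar)) :=
        mul_le_mul_of_nonneg_left hsum (by positivity)
    _ = 2 / (η * ((m : ℝ) + 1)) * (P w0 - P wstar) := by field_simp
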